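/- arXiv:2103.00668 — 8 statements merged into one kernel-verified Lean document; each statement's English description precedes it below -/
import Mathlib

section
/- Let (X, μ) and (Y, ν) be σ-finite measure spaces, let γ₁ : X → [0,∞) be measurable, and let k : X × Y → [0,∞) be a probability kernel density (measurable with ∫ k(x,y) dν(y) = 1 for every x). Suppose (τ₁, w₁) is a random pair strictly properly weighted for γ₁, and that conditionally on (τ₁, w₁), a random element τ₂ of Y is drawn with conditional law k(τ₁, ·)·ν. Then the pair ((τ₁, τ₂), w₁) is strictly properly weighted for the density γ₂(x,y) := γ₁(x)·k(x,y) on (X × Y, μ ⊗ ν), and moreover the normalizing constants agree: ∫ γ₂ d(μ⊗ν) = ∫ γ₁ dμ. -/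
open MeasureTheory ProbabilityTheory ENNReal NNReal

/-- Strict proper weighting of the extend combinator: extending a strictly properly
weighted sampler for `γ₁` by a probability kernel density `k` yields a sampler
strictly properly weighted for `γ₂(x,y) = γ₁(x)·k(x,y)`, with the same normalizing
constant. -/
theorem extend_strictly_properly_weighted
    {X Y α : Type*} [MeasurableSpace X] [MeasurableSpace Y] [MeasurableSpace α]
    (μ : Measure X) [SigmaFinite μ] (ν : Measure Y) [SigmaFinite ν]
    (P : Measure α) [IsProbabilityMeasure P]
    (γ₁ : X → ℝ≥0) (hγ₁ : Measurable γ₁)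
    (k : X × Y → ℝ≥0) (hk : Measurable k)
    (hk1 : ∀ x, ∫⁻ y, (k (x, y) : ℝ≥0∞) ∂ν = 1)
    (τ₁ : α → X) (w₁ : α → ℝ≥0) (τ₂ : α → Y)
    (hτ₁ : Measurable τ₁) (hw₁ : Measurable w₁) (hτ₂ : Measurable τ₂)
    (hpw : ∀ h : X → ℝ≥0∞, Measurable h →
      ∫⁻ a, (w₁ a : ℝ≥0∞) * h (τ₁ a) ∂P = ∫⁻ x, (γ₁ x : ℝ≥0∞) * h x ∂μ)
    (hcond : ∀ g : X × ℝ≥0 × Y → ℝ≥0∞, Measurable g →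
      ∫⁻ a, g (τ₁ a, w₁ a, τ₂ a) ∂P
        = ∫⁻ a, ∫⁻ y, (k (τ₁ a, y) : ℝ≥0∞) * g (τ₁ a, w₁ a, y) ∂ν ∂P) :
    (∀ h : X × Y → ℝ≥0∞, Measurable h →
      ∫⁻ a, (w₁ a : ℝ≥0∞) * h (τ₁ a, τ₂ a) ∂P
        = ∫⁻ z, ((γ₁ z.1 : ℝ≥0∞) * (k z : ℝ≥0∞)) * h z ∂(μ.prod ν))
    ∧ ∫⁻ z, (γ₁ z.1 : ℝ≥0∞) * (k z : ℝ≥0∞) ∂(μ.prod ν)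
        = ∫⁻ x, (γ₁ x : ℝ≥0∞) ∂μ := by
  have hnorm : ∫⁻ z, (γ₁ z.1 : ℝ≥0∞) * (k z : ℝ≥0∞) ∂(μ.prod ν)
      = ∫⁻ x, (γ₁ x : ℝ≥0∞) ∂μ := by
    rw [MeasureTheory.lintegral_prod _ (by fun_prop)]
    simp only []
    refine lintegral_congr fun x => ?_
    rw [lintegral_const_mul _ (by fun_prop), hk1 x, mul_one]
  refine ⟨fun h mh => ?_, hnorm⟩
  have hg : Measurable fun p : X × ℝ≥0 × Y => (p.2.1 : ℝ≥0∞) * h (p.1, p.2.2) := by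
    fun_prop
  have step1 := hcond (fun p => (p.2.1 : ℝ≥0∞) * h (p.1, p.2.2)) hg
  simp only [] at step1
  have hH : Measurable fun x => ∫⁻ y, (k (x, y) : ℝ≥0∞) * h (x, y) ∂ν := by
    apply Measurable.lintegral_prod_right
    fun_prop
  have step2 := hpw (fun x => ∫⁻ y, (k (x, y) : ℝ≥0∞) * h (x, y) ∂ν) hH
  rw [step1]
  have : ∀ a, ∫⁻ y, (k (τ₁ a, y) : ℝ≥0∞) * ((w₁ a : ℝ≥0∞) * h (τ₁ a, y)) ∂ν
      = (w₁ a : ℝ≥0∞) * ∫⁻ y, (k (τ₁ a, y) : ℝ≥0∞) * h (τ₁ a, y) ∂ν := by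
    intro a
    rw [← lintegral_const_mul _ (by fun_prop)]
    exact lintegral_congr fun y => by ring
  simp only [this]
  rw [step2, MeasureTheory.lintegral_prod _ (by fun_prop)]
  refine lintegral_congr fun x => ?_
  rw [← lintegral_const_mul _ (by fun_prop)]
  exact lintegral_congr fun y => by ring
end

section
/- Let (X, μ) and (Y, ν) be σ-finite measure spaces. Let γ₁ : X → [0,∞) and γ₂ : X × Y → [0,∞) be measurable. Suppose (τ₁, w₁) is a random pair strictly properly weighted for γ₁, and suppose (κ_x)_{x ∈ X} is a Markov kernel from X to Y × [0,∞) such that for every x ∈ X and every measurable h : Y → [0,∞], ∫ w·h(y) dκ_x(y,w) = ∫ γ₂(x,y) h(y) dν(y); suppose further that conditionally on (τ₁, w₁), the pair (τ₂, w₂) is drawn from κ_{τ₁}. Then the pair ((τ₁, τ₂), w₁·w₂) is strictly properly weighted for the density γ₃(x,y) := γ₁(x)·γ₂(x,y) on (X × Y, μ ⊗ ν). -/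
open MeasureTheory ProbabilityTheory ENNReal NNReal

/-- Strict proper weighting of the compose combinator: composing a strictly properly
weighted sampler for `γ₁` with a Markov kernel of properly weighted pairs for
`γ₂(x,·)`, multiplying the weights, is strictly properly weighted for
`γ₃(x,y) = γ₁(x)·γ₂(x,y)`. -/
theorem compose_strictly_properly_weighted
    {X Y α : Type*} [MeasurableSpace X] [MeasurableSpace Y] [MeasurableSpace α]
    (μ : Measure X) [SigmaFinite μ] (ν : Measure Y) [SigmaFinite ν]
    (P : Measure α) [IsProbabilityMeasure P]
    (γ₁ : X → ℝ≥0) (hγ₁ : Measurable γ₁)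
    (γ₂ : X × Y → ℝ≥0) (hγ₂ : Measurable γ₂)
    (κ : Kernel X (Y × ℝ≥0)) [IsMarkovKernel κ]
    (hκ : ∀ x, ∀ h : Y → ℝ≥0∞, Measurable h →
      ∫⁻ p, (p.2 : ℝ≥0∞) * h p.1 ∂(κ x) = ∫⁻ y, (γ₂ (x, y) : ℝ≥0∞) * h y ∂ν)
    (τ₁ : α → X) (w₁ : α → ℝ≥0) (τ₂ : α → Y) (w₂ : α → ℝ≥0)
    (hτ₁ : Measurable τ₁) (hw₁ : Measurable w₁)
    (hτ₂ : Measurable τ₂) (hw₂ : Measurable w₂)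
    (hpw : ∀ h : X → ℝ≥0∞, Measurable h →
      ∫⁻ a, (w₁ a : ℝ≥0∞) * h (τ₁ a) ∂P = ∫⁻ x, (γ₁ x : ℝ≥0∞) * h x ∂μ)
    (hcond : ∀ g : X × ℝ≥0 × (Y × ℝ≥0) → ℝ≥0∞, Measurable g →
      ∫⁻ a, g (τ₁ a, w₁ a, (τ₂ a, w₂ a)) ∂P
        = ∫⁻ a, ∫⁻ p, g (τ₁ a, w₁ a, p) ∂(κ (τ₁ a)) ∂P) :
    ∀ h : X × Y → ℝ≥0∞, Measurable h →
      ∫⁻ a, ((w₁ a * w₂ a : ℝ≥0) : ℝ≥0∞) * h (τ₁ a, τ₂ a) ∂P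
        = ∫⁻ z, ((γ₁ z.1 : ℝ≥0∞) * (γ₂ z : ℝ≥0∞)) * h z ∂(μ.prod ν) := by
  intro h hh
  -- g : full joint integrand
  set g : X × ℝ≥0 × (Y × ℝ≥0) → ℝ≥0∞ :=
    fun q => (q.2.1 : ℝ≥0∞) * ((q.2.2.2 : ℝ≥0∞) * h (q.1, q.2.2.1)) with hg
  have hgm : Measurable g := by
    apply Measurable.mul
    · exact measurable_coe_nnreal_ennreal.comp (measurable_fst.comp measurable_snd)
    · exact (measurable_coe_nnreal_ennreal.comp
        (measurable_snd.comp (measurable_snd.comp measurable_snd))).mul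
        (hh.comp (measurable_fst.prodMk
          (measurable_fst.comp (measurable_snd.comp measurable_snd))))
  have h1 : ∫⁻ a, ((w₁ a * w₂ a : ℝ≥0) : ℝ≥0∞) * h (τ₁ a, τ₂ a) ∂P
      = ∫⁻ a, g (τ₁ a, w₁ a, (τ₂ a, w₂ a)) ∂P := by
    refine lintegral_congr fun a => ?_
    simp [hg, ENNReal.coe_mul, mul_assoc, mul_left_comm]
  rw [h1, hcond g hgm]
  have h2 : ∀ a, ∫⁻ p, g (τ₁ a, w₁ a, p) ∂(κ (τ₁ a))
      = (w₁ a : ℝ≥0∞) * ∫⁻ y, (γ₂ (τ₁ a, y) : ℝ≥0∞) * h (τ₁ a, y) ∂ν := by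
    intro a
    rw [hg]
    simp only
    rw [lintegral_const_mul _ (by
      exact (measurable_coe_nnreal_ennreal.comp measurable_snd).mul
        (hh.comp (measurable_const.prodMk measurable_fst)))]
    congr 1
    exact hκ (τ₁ a) (fun y => h (τ₁ a, y)) (hh.comp (measurable_const.prodMk measurable_id))
  simp_rw [h2]
  have hF : Measurable fun x => ∫⁻ y, (γ₂ (x, y) : ℝ≥0∞) * h (x, y) ∂ν := by
    apply Measurable.lintegral_prod_right
    exact (measurable_coe_nnreal_ennreal.comp hγ₂).mul hh
  rw [hpw _ hF, lintegral_prod]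
  · refine lintegral_congr fun x => ?_
    rw [← lintegral_const_mul _ (by fun_prop :
      Measurable fun y => (γ₂ (x, y) : ℝ≥0∞) * h (x, y))]
    exact lintegral_congr fun y => by simp [mul_assoc]
  · exact (by fun_prop :
      Measurable fun z : X × Y => (γ₁ z.1 : ℝ≥0∞) * (γ₂ z : ℝ≥0∞) * h z).aemeasurable
end

section
/- Let (Ω, μ) be a σ-finite measure space and γ : Ω → [0,∞) measurable. Fix L ≥ 1 and let ((τ^1, w^1), …, (τ^L, w^L)) be random pairs in Ω × [0,∞), defined on a common probability space, such that for each l and every measurable h : Ω → [0,∞], E[w^l · h(τ^l)] = ∫ γ·h dμ. Conditionally on the whole collection, draw indices a^1, …, a^L in {1, …, L} such that for each l and k, the conditional probability that a^l = k equals w^k / Σ_{l'} w^{l'} (on the event Σ_{l'} w^{l'} > 0; on the complementary event the indices may be arbitrary). Then for each l, the resampled pair (τ^{a^l}, (1/L)·Σ_{l'=1}^L w^{l'}) is strictly properly weighted for γ. -/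
/-!
Split the expectation according to the selected index `k = a^l`. Where the total weight
`W = ∑ i, w^i` vanishes, the integrand is zero. Where `W > 0`, index `k` is selected with
conditional probability `w^k / W`, so the outgoing weight `W / L` attached to `τ^k` contributes
`E[w^k h(τ^k)] / L = (∫ γ h dμ) / L`. The `L` equal contributions add up to `∫ γ h dμ`.
-/

open MeasureTheory ENNReal NNReal

theorem lintegral_comp_eq_sum_ite_mul {α ι : Type*} [MeasurableSpace α] [Fintype ι]
    [DecidableEq ι] [MeasurableSpace ι] [MeasurableSingletonClass ι] (μ : Measure α)
    {a : α → ι} (ha : Measurable a) (f : ι → α → ℝ≥0∞) :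
    ∫⁻ ω, f (a ω) ω ∂μ = ∑ k, ∫⁻ ω, (if a ω = k then 1 else 0) * f k ω ∂μ := by
  have hfiber : ∀ k, MeasurableSet (a ⁻¹' {k}) := fun k => ha (measurableSet_singleton k)
  calc ∫⁻ ω, f (a ω) ω ∂μ = ∑ k, ∫⁻ ω in a ⁻¹' {k}, f (a ω) ω ∂μ := by
        rw [← tsum_fintype (L := .unconditional _),
          ← lintegral_iUnion hfiber (pairwise_disjoint_fiber a), ← Set.preimage_iUnion,
          Set.iUnion_of_singleton, Set.preimage_univ, Measure.restrict_univ]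
    _ = ∑ k, ∫⁻ ω, (if a ω = k then 1 else 0) * f k ω ∂μ := by
        refine Finset.sum_congr rfl fun k _ => ?_
        rw [← lintegral_indicator (hfiber k)]
        refine lintegral_congr fun ω => ?_
        by_cases hk : a ω = k <;> simp [Set.indicator, hk]

theorem ENNReal.div_mul_mul_cancel {a b c : ℝ≥0∞} (ha : b = 0 → a = 0) (hb : b ≠ ∞) :
    a / b * (b * c) = a * c := by
  rw [div_eq_mul_inv, show a * b⁻¹ * (b * c) = b⁻¹ * (b * (a * c)) by ring]
  exact ENNReal.inv_mul_cancel_left' (fun h => by simp [ha h]) (fun h => absurd h hb)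

theorem lintegral_ite_mul_sum_mul_eq {α ι : Type*} [MeasurableSpace α] [Fintype ι]
    [DecidableEq ι] (μ : Measure α) (w : ι → α → ℝ≥0) (a : α → ι) (k : ι) (φ : α → ℝ≥0∞)
    (hsel : ∫⁻ ω in {ω | 0 < ∑ i, w i ω},
        (if a ω = k then 1 else 0) * ((∑ i, (w i ω : ℝ≥0∞)) * φ ω) ∂μ
      = ∫⁻ ω in {ω | 0 < ∑ i, w i ω},
        (w k ω : ℝ≥0∞) / (∑ i, (w i ω : ℝ≥0∞)) * ((∑ i, (w i ω : ℝ≥0∞)) * φ ω) ∂μ) :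
    ∫⁻ ω, (if a ω = k then 1 else 0) * ((∑ i, (w i ω : ℝ≥0∞)) * φ ω) ∂μ
      = ∫⁻ ω, w k ω * φ ω ∂μ := by
  have hpos : ∀ ω, (∑ i, (w i ω : ℝ≥0∞)) ≠ 0 → ω ∈ {ω | 0 < ∑ i, w i ω} := fun ω hω => by
    simpa [pos_iff_ne_zero, ← ofNNReal_finsetSum] using hω
  have hle : ∀ ω, (w k ω : ℝ≥0∞) ≤ ∑ i, (w i ω : ℝ≥0∞) := fun ω =>
    Finset.single_le_sum_of_canonicallyOrdered (f := fun i => (w i ω : ℝ≥0∞)) (Finset.mem_univ k)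
  calc ∫⁻ ω, (if a ω = k then 1 else 0) * ((∑ i, (w i ω : ℝ≥0∞)) * φ ω) ∂μ
      = ∫⁻ ω in {ω | 0 < ∑ i, w i ω},
          (if a ω = k then 1 else 0) * ((∑ i, (w i ω : ℝ≥0∞)) * φ ω) ∂μ :=
        (setLIntegral_eq_of_support_subset fun ω hω =>
          hpos ω (left_ne_zero_of_mul (right_ne_zero_of_mul hω))).symm
    _ = ∫⁻ ω in {ω | 0 < ∑ i, w i ω}, w k ω * φ ω ∂μ := by
        rw [hsel]
        refine lintegral_congr fun ω => ENNReal.div_mul_mul_cancel (fun h => ?_) ?_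
        · exact nonpos_iff_eq_zero.1 (h ▸ hle ω)
        · exact ENNReal.sum_ne_top.2 fun i _ => coe_ne_top
    _ = ∫⁻ ω, w k ω * φ ω ∂μ :=
        setLIntegral_eq_of_support_subset fun ω hω =>
          hpos ω (ne_bot_of_le_ne_bot (left_ne_zero_of_mul hω) (hle ω))

theorem resample_strictly_properly_weighted_general
    {Ω α : Type*} [MeasurableSpace Ω] [MeasurableSpace α]
    (μ : Measure Ω)
    (P : Measure α)
    (γ : Ω → ℝ≥0)
    (L : ℕ)
    (τ : Fin L → α → Ω) (w : Fin L → α → ℝ≥0) (a : Fin L → α → Fin L)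
    (ha : ∀ l, Measurable (a l))
    (hpw : ∀ l, ∀ h : Ω → ℝ≥0∞, Measurable h →
      ∫⁻ ω, (w l ω : ℝ≥0∞) * h (τ l ω) ∂P = ∫⁻ x, (γ x : ℝ≥0∞) * h x ∂μ)
    (hres : ∀ l k : Fin L, ∀ g : (Fin L → Ω × ℝ≥0) → ℝ≥0∞, Measurable g →
      ∫⁻ ω in {ω | 0 < ∑ i, w i ω},
          (if a l ω = k then (1 : ℝ≥0∞) else 0) * g (fun i => (τ i ω, w i ω)) ∂P
        = ∫⁻ ω in {ω | 0 < ∑ i, w i ω},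
            ((w k ω : ℝ≥0∞) / ∑ i, (w i ω : ℝ≥0∞)) * g (fun i => (τ i ω, w i ω)) ∂P)
    (l : Fin L) (h : Ω → ℝ≥0∞) (hh : Measurable h) :
    ∫⁻ ω, ((∑ i, (w i ω : ℝ≥0∞)) / (L : ℝ≥0∞)) * h (τ (a l ω) ω) ∂P
      = ∫⁻ x, (γ x : ℝ≥0∞) * h x ∂μ := by
  set I := ∫⁻ x, (γ x : ℝ≥0∞) * h x ∂μ
  have hL : (L : ℝ≥0∞) ≠ 0 := Nat.cast_ne_zero.2 (Fin.pos l).ne'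
  have hcomponent : ∀ k, ∫⁻ ω, (if a l ω = k then 1 else 0) *
      ((∑ i, (w i ω : ℝ≥0∞)) * h (τ k ω)) ∂P = I := fun k =>
    (lintegral_ite_mul_sum_mul_eq P w (a l) k _
      (hres l k (fun f => (∑ i, ((f i).2 : ℝ≥0∞)) * h (f k).1) (by fun_prop))).trans
      (hpw k h hh)
  calc ∫⁻ ω, ((∑ i, (w i ω : ℝ≥0∞)) / L) * h (τ (a l ω) ω) ∂P
      = (L : ℝ≥0∞)⁻¹ * ∫⁻ ω, (∑ i, (w i ω : ℝ≥0∞)) * h (τ (a l ω) ω) ∂P := by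
        rw [← lintegral_const_mul' _ _ (ENNReal.inv_ne_top.2 hL)]
        simp only [div_eq_mul_inv, mul_comm, mul_left_comm]
    _ = (L : ℝ≥0∞)⁻¹ * (L * I) := by
        rw [lintegral_comp_eq_sum_ite_mul P (ha l)
          (fun k ω => (∑ i, (w i ω : ℝ≥0∞)) * h (τ k ω)),
          Finset.sum_congr rfl fun k _ => hcomponent k, Finset.sum_const, Finset.card_univ,
          Fintype.card_fin, nsmul_eq_mul]
    _ = I := ENNReal.inv_mul_cancel_left hL (natCast_ne_top L)

/-- Strict proper weighting of the resample combinator: multinomial importance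
resampling, with outgoing weights set to the average of incoming weights,
preserves strict proper weighting. -/
theorem resample_strictly_properly_weighted
    {Ω α : Type*} [MeasurableSpace Ω] [MeasurableSpace α]
    (μ : Measure Ω) [SigmaFinite μ]
    (P : Measure α) [IsProbabilityMeasure P]
    (γ : Ω → ℝ≥0) (hγ : Measurable γ)
    (L : ℕ) (hL : 1 ≤ L)
    (τ : Fin L → α → Ω) (w : Fin L → α → ℝ≥0) (a : Fin L → α → Fin L)
    (hτ : ∀ l, Measurable (τ l)) (hw : ∀ l, Measurable (w l))
    (ha : ∀ l, Measurable (a l))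
    (hpw : ∀ l, ∀ h : Ω → ℝ≥0∞, Measurable h →
      ∫⁻ ω, (w l ω : ℝ≥0∞) * h (τ l ω) ∂P = ∫⁻ x, (γ x : ℝ≥0∞) * h x ∂μ)
    (hres : ∀ l k : Fin L, ∀ g : (Fin L → Ω × ℝ≥0) → ℝ≥0∞, Measurable g →
      ∫⁻ ω in {ω | 0 < ∑ i, w i ω},
          (if a l ω = k then (1 : ℝ≥0∞) else 0) * g (fun i => (τ i ω, w i ω)) ∂P
        = ∫⁻ ω in {ω | 0 < ∑ i, w i ω},
            ((w k ω : ℝ≥0∞) / ∑ i, (w i ω : ℝ≥0∞)) * g (fun i => (τ i ω, w i ω)) ∂P)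
    (l : Fin L) (h : Ω → ℝ≥0∞) (hh : Measurable h) :
    ∫⁻ ω, ((∑ i, (w i ω : ℝ≥0∞)) / (L : ℝ≥0∞)) * h (τ (a l ω) ω) ∂P
      = ∫⁻ x, (γ x : ℝ≥0∞) * h x ∂μ :=
  resample_strictly_properly_weighted_general μ P γ L τ w a ha hpw hres l h hh
end

section
/- Let (X, μ) and (Y, ν) be σ-finite measure spaces. Let γ_q : X → (0,∞) be measurable, let k : X × Y → (0,∞) be a probability kernel density from X to Y (∫ k(x,y) dν(y) = 1 for all x), let r : Y × X → [0,∞) be a probability kernel density from Y to X (∫ r(y,x) dμ(x) = 1 for all y), and let γ̃ : Y → [0,∞) be measurable. Suppose (τ₁, w₁) is a random pair strictly properly weighted for γ_q, and conditionally on (τ₁, w₁), a random element τ₂ of Y is drawn with conditional law k(τ₁, ·)·ν. Define the outgoing weight w := w₁ · γ̃(τ₂)·r(τ₂, τ₁) / (γ_q(τ₁)·k(τ₁, τ₂)). Then (τ₂, w) is strictly properly weighted for γ̃: for every measurable h : Y → [0,∞], E[w · h(τ₂)] = ∫ γ̃·h dν. -/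
open MeasureTheory ProbabilityTheory ENNReal NNReal

/-- Strict proper weighting of the propose combinator: reweighting a properly
weighted proposal by the ratio of the extended target density times a reverse
kernel over the proposal density times the forward kernel yields a sampler
strictly properly weighted for the extended target `γ̃`. -/
theorem propose_strictly_properly_weighted
    {X Y α : Type*} [MeasurableSpace X] [MeasurableSpace Y] [MeasurableSpace α]
    (μ : Measure X) [SigmaFinite μ] (ν : Measure Y) [SigmaFinite ν]
    (P : Measure α) [IsProbabilityMeasure P]
    (γq : X → ℝ≥0) (hγq : Measurable γq) (hγqpos : ∀ x, 0 < γq x)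
    (k : X × Y → ℝ≥0) (hk : Measurable k) (hkpos : ∀ z, 0 < k z)
    (hk1 : ∀ x, ∫⁻ y, (k (x, y) : ℝ≥0∞) ∂ν = 1)
    (r : Y × X → ℝ≥0) (hr : Measurable r)
    (hr1 : ∀ y, ∫⁻ x, (r (y, x) : ℝ≥0∞) ∂μ = 1)
    (γt : Y → ℝ≥0) (hγt : Measurable γt)
    (τ₁ : α → X) (w₁ : α → ℝ≥0) (τ₂ : α → Y)
    (hτ₁ : Measurable τ₁) (hw₁ : Measurable w₁) (hτ₂ : Measurable τ₂)
    (hpw : ∀ h : X → ℝ≥0∞, Measurable h →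
      ∫⁻ a, (w₁ a : ℝ≥0∞) * h (τ₁ a) ∂P = ∫⁻ x, (γq x : ℝ≥0∞) * h x ∂μ)
    (hcond : ∀ g : X × ℝ≥0 × Y → ℝ≥0∞, Measurable g →
      ∫⁻ a, g (τ₁ a, w₁ a, τ₂ a) ∂P
        = ∫⁻ a, ∫⁻ y, (k (τ₁ a, y) : ℝ≥0∞) * g (τ₁ a, w₁ a, y) ∂ν ∂P) :
    ∀ h : Y → ℝ≥0∞, Measurable h →
      ∫⁻ a, ((w₁ a * (γt (τ₂ a) * r (τ₂ a, τ₁ a)) /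
          (γq (τ₁ a) * k (τ₁ a, τ₂ a)) : ℝ≥0) : ℝ≥0∞) * h (τ₂ a) ∂P
        = ∫⁻ y, (γt y : ℝ≥0∞) * h y ∂ν := by
  intro h hh
  have hγq0 : ∀ x, (γq x : ℝ≥0∞) ≠ 0 := fun x => by exact_mod_cast (hγqpos x).ne'
  have hk0 : ∀ z, (k z : ℝ≥0∞) ≠ 0 := fun z => by exact_mod_cast (hkpos z).ne'
  set g : X × ℝ≥0 × Y → ℝ≥0∞ := fun p =>
    ((p.2.1 * (γt p.2.2 * r (p.2.2, p.1)) / (γq p.1 * k (p.1, p.2.2)) : ℝ≥0) : ℝ≥0∞) *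
      h p.2.2 with hg
  have hgm : Measurable g := by simp only [hg]; fun_prop
  set I : X → ℝ≥0∞ := fun x => ∫⁻ y, (γt y : ℝ≥0∞) * r (y, x) * h y ∂ν with hI
  have hIm : Measurable I := by
    apply Measurable.lintegral_prod_right'
      (f := fun p : X × Y => (γt p.2 : ℝ≥0∞) * r (p.2, p.1) * h p.2)
    fun_prop
  have key : ∀ (x : X) (w : ℝ≥0),
      ∫⁻ y, (k (x, y) : ℝ≥0∞) * g (x, w, y) ∂ν = (w : ℝ≥0∞) * (I x / γq x) := by
    intro x w
    have hpt : ∀ y, (k (x, y) : ℝ≥0∞) * g (x, w, y)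
        = ((w : ℝ≥0∞) / γq x) * ((γt y : ℝ≥0∞) * r (y, x) * h y) := by
      intro y
      simp only [hg]
      rw [ENNReal.coe_div (mul_pos (hγqpos x) (hkpos _)).ne', ENNReal.coe_mul,
        ENNReal.coe_mul, ENNReal.coe_mul, div_eq_mul_inv, div_eq_mul_inv,
        ENNReal.mul_inv (Or.inl (hγq0 x)) (Or.inl ENNReal.coe_ne_top)]
      rw [show (k (x, y) : ℝ≥0∞) * ((w : ℝ≥0∞) * ((γt y : ℝ≥0∞) * r (y, x)) *
            ((γq x : ℝ≥0∞)⁻¹ * (k (x, y) : ℝ≥0∞)⁻¹) * h y)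
          = ((k (x, y) : ℝ≥0∞) * (k (x, y) : ℝ≥0∞)⁻¹) *
            ((w : ℝ≥0∞) * (γq x : ℝ≥0∞)⁻¹ * ((γt y : ℝ≥0∞) * r (y, x) * h y)) by ring]
      rw [ENNReal.mul_inv_cancel (hk0 _) ENNReal.coe_ne_top, one_mul]
    have hmint : Measurable fun y => (γt y : ℝ≥0∞) * r (y, x) * h y := by fun_prop
    rw [lintegral_congr hpt, lintegral_const_mul _ hmint, hI, div_eq_mul_inv, div_eq_mul_inv]
    ring
  rw [hcond g hgm]
  simp only [key]
  have hHm : Measurable fun x => I x / γq x := hIm.div hγq.coe_nnreal_ennreal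
  rw [hpw _ hHm]
  have hcancel : ∀ x, (γq x : ℝ≥0∞) * (I x / γq x) = I x := fun x => by
    rw [mul_comm, ENNReal.div_mul_cancel (hγq0 x) ENNReal.coe_ne_top]
  rw [lintegral_congr hcancel]
  simp only [hI]
  rw [lintegral_lintegral_swap]
  · refine lintegral_congr fun y => ?_
    have : ∀ x, (γt y : ℝ≥0∞) * r (y, x) * h y
        = ((γt y : ℝ≥0∞) * h y) * (r (y, x) : ℝ≥0∞) := fun x => by ring
    rw [lintegral_congr this, lintegral_const_mul _
      (show Measurable fun x => (r (y, x) : ℝ≥0∞) by fun_prop), hr1, mul_one]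
  · apply Measurable.aemeasurable
    show Measurable fun p : X × Y => (γt p.2 : ℝ≥0∞) * r (p.2, p.1) * h p.2
    fun_prop
end

section
/- Let (Z, μ) and (A, ν) be σ-finite measure spaces, let γ : Z → [0,∞) be measurable, and let ρ : Z × A → [0,∞) be a probability kernel density (∫ ρ(z,a) dν(a) = 1 for every z). If a random pair ((ζ, α), w) with values in (Z × A) × [0,∞) is strictly properly weighted for the extended density γ̃(z,a) := γ(z)·ρ(z,a) on (Z × A, μ ⊗ ν), then the pair (ζ, w), obtained by discarding the auxiliary component, is strictly properly weighted for γ on (Z, μ). -/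
open MeasureTheory ENNReal NNReal

theorem lintegral_prod_comp_fst_mul_of_lintegral_eq_one
    {Z A : Type*} [MeasurableSpace Z] [MeasurableSpace A]
    (μ : Measure Z) (ν : Measure A) [SFinite ν]
    {f : Z → ℝ≥0∞} (hf : Measurable f) {ρ : Z × A → ℝ≥0∞} (hρ : Measurable ρ)
    (hρ1 : ∀ z, ∫⁻ a, ρ (z, a) ∂ν = 1) :
    ∫⁻ p, f p.1 * ρ p ∂(μ.prod ν) = ∫⁻ z, f z ∂μ := by
  rw [lintegral_prod _ (by fun_prop)]
  refine lintegral_congr fun z => ?_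
  dsimp only
  rw [lintegral_const_mul _ (by fun_prop), hρ1, mul_one]

theorem marginalize_strictly_properly_weighted_general
    {Z A α : Type*} [MeasurableSpace Z] [MeasurableSpace A] [MeasurableSpace α]
    (μ : Measure Z) (ν : Measure A) [SigmaFinite ν]
    (P : Measure α)
    (γ : Z → ℝ≥0) (hγ : Measurable γ)
    (ρ : Z × A → ℝ≥0) (hρ : Measurable ρ)
    (hρ1 : ∀ z, ∫⁻ a, (ρ (z, a) : ℝ≥0∞) ∂ν = 1)
    (ζ : α → Z) (ξ : α → A) (w : α → ℝ≥0)
    (hpw : ∀ h : Z × A → ℝ≥0∞, Measurable h →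
      ∫⁻ ω, (w ω : ℝ≥0∞) * h (ζ ω, ξ ω) ∂P
        = ∫⁻ p, ((γ p.1 : ℝ≥0∞) * (ρ p : ℝ≥0∞)) * h p ∂(μ.prod ν)) :
    ∀ h : Z → ℝ≥0∞, Measurable h →
      ∫⁻ ω, (w ω : ℝ≥0∞) * h (ζ ω) ∂P = ∫⁻ z, (γ z : ℝ≥0∞) * h z ∂μ := by
  intro h hh
  calc ∫⁻ ω, (w ω : ℝ≥0∞) * h (ζ ω) ∂P
      = ∫⁻ p, ((γ p.1 : ℝ≥0∞) * (ρ p : ℝ≥0∞)) * h p.1 ∂(μ.prod ν) :=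
        hpw (fun p => h p.1) (hh.comp measurable_fst)
    _ = ∫⁻ p, ((γ p.1 : ℝ≥0∞) * h p.1) * (ρ p : ℝ≥0∞) ∂(μ.prod ν) := by
        simp only [mul_right_comm _ (ρ _ : ℝ≥0∞)]
    _ = ∫⁻ z, (γ z : ℝ≥0∞) * h z ∂μ :=
        lintegral_prod_comp_fst_mul_of_lintegral_eq_one μ ν
          (f := fun z => (γ z : ℝ≥0∞) * h z) (by fun_prop) (by fun_prop) hρ1

/-- Marginalization preserves strict proper weighting: if `((ζ, α), w)` is strictly
properly weighted for the auxiliary-variable extension `γ̃(z,a) = γ(z)·ρ(z,a)` where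
the auxiliary conditional `ρ` integrates to one, then `(ζ, w)` is strictly properly
weighted for `γ`. -/
theorem marginalize_strictly_properly_weighted
    {Z A α : Type*} [MeasurableSpace Z] [MeasurableSpace A] [MeasurableSpace α]
    (μ : Measure Z) [SigmaFinite μ] (ν : Measure A) [SigmaFinite ν]
    (P : Measure α) [IsProbabilityMeasure P]
    (γ : Z → ℝ≥0) (hγ : Measurable γ)
    (ρ : Z × A → ℝ≥0) (hρ : Measurable ρ)
    (hρ1 : ∀ z, ∫⁻ a, (ρ (z, a) : ℝ≥0∞) ∂ν = 1)
    (ζ : α → Z) (ξ : α → A) (w : α → ℝ≥0)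
    (hζ : Measurable ζ) (hξ : Measurable ξ) (hw : Measurable w)
    (hpw : ∀ h : Z × A → ℝ≥0∞, Measurable h →
      ∫⁻ ω, (w ω : ℝ≥0∞) * h (ζ ω, ξ ω) ∂P
        = ∫⁻ p, ((γ p.1 : ℝ≥0∞) * (ρ p : ℝ≥0∞)) * h p ∂(μ.prod ν)) :
    ∀ h : Z → ℝ≥0∞, Measurable h →
      ∫⁻ ω, (w ω : ℝ≥0∞) * h (ζ ω) ∂P = ∫⁻ z, (γ z : ℝ≥0∞) * h z ∂μ :=
  marginalize_strictly_properly_weighted_general μ ν P γ hγ ρ hρ hρ1 ζ ξ w hpw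
end

section
/- Let (U, λ), (Z, μ), (V, ν) be σ-finite measure spaces. Let q_u : U → [0,∞) be a measurable probability density (∫ q_u dλ = 1), let q_z : U × Z → (0,∞) be a probability kernel density (∫ q_z(u,z) dμ(z) = 1 for all u), let p_v : Z × V → (0,∞) be a probability kernel density (∫ p_v(z,v) dν(v) = 1 for all z), and let γ : V × Z → [0,∞) be measurable. Sample u with law q_u·λ, then conditionally z with law q_z(u,·)·μ, then conditionally v with law p_v(z,·)·ν, and set w := γ(v,z) / (q_z(u,z)·p_v(z,v)). Then (( v, z), w) is strictly properly weighted for γ: for every measurable h : V × Z → [0,∞], E[w · h(v,z)] = ∫∫ γ(v,z) h(v,z) dν(v) dμ(z). -/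
open MeasureTheory ENNReal NNReal

/-!
Extending the target by the proposal's conditional `q_z(u, ·)` of the superfluous variable and the
proposal by a conditional `p_v(z, ·)` for the missing variable, the weight
`γ(v,z) / (q_z(u,z) p_v(z,v))` cancels the two inner densities exactly, because they are
positive. What is left of `E[w h]` is `∫ q_u(u) (∫∫ γ h) dλ(u)`, and `q_u` integrates to one.
-/

namespace ENNReal

lemma coe_mul_coe_mul_coe_div_mul_cancel {a b : ℝ≥0} (ha : a ≠ 0) (hb : b ≠ 0) (c : ℝ≥0)
    (x : ℝ≥0∞) : (a : ℝ≥0∞) * ((b : ℝ≥0∞) * (((c / (a * b) : ℝ≥0) : ℝ≥0∞) * x)) = c * x := by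
  rw [← mul_assoc, ← mul_assoc, ← coe_mul, ← coe_mul, mul_div_cancel₀ c (mul_ne_zero ha hb)]

end ENNReal

namespace MeasureTheory

variable {Z V : Type*} [MeasurableSpace Z] [MeasurableSpace V]

lemma lintegral_mul_lintegral_mul_importance_weight (μ : Measure Z) (ν : Measure V)
    (q : Z → ℝ≥0) (hq : ∀ y, q y ≠ 0) (p : Z → V → ℝ≥0) (hp : ∀ y s, p y s ≠ 0)
    (γ : Z → V → ℝ≥0) (h : Z → V → ℝ≥0∞) :
    ∫⁻ y, (q y : ℝ≥0∞) *
        ∫⁻ s, (p y s : ℝ≥0∞) * (((γ y s / (q y * p y s) : ℝ≥0) : ℝ≥0∞) * h y s) ∂ν ∂μ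
      = ∫⁻ y, ∫⁻ s, (γ y s : ℝ≥0∞) * h y s ∂ν ∂μ := by
  refine lintegral_congr fun y => ?_
  rw [← lintegral_const_mul' _ _ coe_ne_top]
  exact lintegral_congr fun s => coe_mul_coe_mul_coe_div_mul_cancel (hq y) (hp y s) _ _

end MeasureTheory

theorem implicit_auxiliary_variable_strictly_properly_weighted_general
    {U Z V α : Type*} [MeasurableSpace U] [MeasurableSpace Z] [MeasurableSpace V]
    [MeasurableSpace α]
    (lam : Measure U)
    (μ : Measure Z)
    (ν : Measure V)
    (P : Measure α)
    (qu : U → ℝ≥0) (hqu : Measurable qu) (hqu1 : ∫⁻ u, (qu u : ℝ≥0∞) ∂lam = 1)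
    (qz : U × Z → ℝ≥0) (hqz : Measurable qz) (hqzpos : ∀ p, 0 < qz p)
    (pv : Z × V → ℝ≥0) (hpv : Measurable pv) (hpvpos : ∀ p, 0 < pv p)
    (γ : V × Z → ℝ≥0) (hγ : Measurable γ)
    (u : α → U) (z : α → Z) (v : α → V)
    (hlaw : ∀ g : U × Z × V → ℝ≥0∞, Measurable g →
      ∫⁻ a, g (u a, z a, v a) ∂P
        = ∫⁻ x, (qu x : ℝ≥0∞) *
            ∫⁻ y, (qz (x, y) : ℝ≥0∞) *
              ∫⁻ s, (pv (y, s) : ℝ≥0∞) * g (x, y, s) ∂ν ∂μ ∂lam) :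
    ∀ h : V × Z → ℝ≥0∞, Measurable h →
      ∫⁻ a, ((γ (v a, z a) / (qz (u a, z a) * pv (z a, v a)) : ℝ≥0) : ℝ≥0∞) *
          h (v a, z a) ∂P
        = ∫⁻ y, ∫⁻ s, (γ (s, y) : ℝ≥0∞) * h (s, y) ∂ν ∂μ := by
  intro h hh
  have hweighted : Measurable fun t : U × Z × V =>
      ((γ (t.2.2, t.2.1) / (qz (t.1, t.2.1) * pv (t.2.1, t.2.2)) : ℝ≥0) : ℝ≥0∞) *
        h (t.2.2, t.2.1) := by
    fun_prop
  rw [hlaw _ hweighted]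
  simp_rw [lintegral_mul_lintegral_mul_importance_weight μ ν (fun y => qz (_, y))
    (fun y => (hqzpos _).ne') (fun y s => pv (y, s)) (fun y s => (hpvpos _).ne')
    (fun y s => γ (s, y)) (fun y s => h (s, y))]
  rw [lintegral_mul_const _ hqu.coe_nnreal_ennreal, hqu1, one_mul]

/-- The implicit auxiliary-variable construction: sampling `u ~ q_u`, then
`z ~ q_z(u,·)`, then `v ~ p_v(z,·)`, and weighting by
`γ(v,z) / (q_z(u,z)·p_v(z,v))` is strictly properly weighted for `γ`. -/
theorem implicit_auxiliary_variable_strictly_properly_weighted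
    {U Z V α : Type*} [MeasurableSpace U] [MeasurableSpace Z] [MeasurableSpace V]
    [MeasurableSpace α]
    (lam : Measure U) [SigmaFinite lam]
    (μ : Measure Z) [SigmaFinite μ]
    (ν : Measure V) [SigmaFinite ν]
    (P : Measure α) [IsProbabilityMeasure P]
    (qu : U → ℝ≥0) (hqu : Measurable qu) (hqu1 : ∫⁻ u, (qu u : ℝ≥0∞) ∂lam = 1)
    (qz : U × Z → ℝ≥0) (hqz : Measurable qz) (hqzpos : ∀ p, 0 < qz p)
    (hqz1 : ∀ u, ∫⁻ z, (qz (u, z) : ℝ≥0∞) ∂μ = 1)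
    (pv : Z × V → ℝ≥0) (hpv : Measurable pv) (hpvpos : ∀ p, 0 < pv p)
    (hpv1 : ∀ z, ∫⁻ v, (pv (z, v) : ℝ≥0∞) ∂ν = 1)
    (γ : V × Z → ℝ≥0) (hγ : Measurable γ)
    (u : α → U) (z : α → Z) (v : α → V)
    (hu : Measurable u) (hz : Measurable z) (hv : Measurable v)
    (hlaw : ∀ g : U × Z × V → ℝ≥0∞, Measurable g →
      ∫⁻ a, g (u a, z a, v a) ∂P
        = ∫⁻ x, (qu x : ℝ≥0∞) *
            ∫⁻ y, (qz (x, y) : ℝ≥0∞) *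
              ∫⁻ s, (pv (y, s) : ℝ≥0∞) * g (x, y, s) ∂ν ∂μ ∂lam) :
    ∀ h : V × Z → ℝ≥0∞, Measurable h →
      ∫⁻ a, ((γ (v a, z a) / (qz (u a, z a) * pv (z a, v a)) : ℝ≥0) : ℝ≥0∞) *
          h (v a, z a) ∂P
        = ∫⁻ y, ∫⁻ s, (γ (s, y) : ℝ≥0∞) * h (s, y) ∂ν ∂μ :=
  implicit_auxiliary_variable_strictly_properly_weighted_general lam μ ν P qu hqu hqu1 qz hqz hqzpos
    pv hpv hpvpos γ hγ u z v hlaw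
end

section
/- Let (V, ν) and (Z, μ) be σ-finite measure spaces, let γ : V × Z → (0,∞) be measurable, and let q : Z × V → (0,∞) be a probability kernel density (∫ q(z,v') dν(v') = 1 for every z). Suppose ((v, z), w) is a random pair strictly properly weighted for γ, and conditionally on ((v,z), w), a new value v' is drawn with conditional law q(z,·)·ν. Define the updated weight w' := w · γ(v', z)·q(z, v) / (q(z, v')·γ(v, z)). Then ((v', z), w') is strictly properly weighted for γ. -/
open MeasureTheory ProbabilityTheory ENNReal NNReal

/-! Conditionally on the current state, the new value `y` has density `q(z,·)`, which cancels
the denominator of the weight: with `G z = ∫ γ(y,z) h(y,z) dν(y)` this gives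
`E[w' h(v',z)] = E[w · q(z,v)/γ(v,z) · G(z)]`. Proper weighting of `(v,z)` turns the right side
into `∫ q(z,x) G(z) d(ν×μ)(x,z)`, and integrating out the discarded old value `x` with
`∫ q(z,·) dν = 1` leaves `∫ G dμ = ∫ γ h d(ν×μ)`. -/

section GibbsUpdate

variable {V Z : Type*}

/-- The updated weight at `((x, z), u, y)`: old state `(x, z)`, old weight `u`, new value `y`. -/
noncomputable def gibbsWeight (γ : V × Z → ℝ≥0) (q : Z × V → ℝ≥0)
    (p : (V × Z) × ℝ≥0 × V) : ℝ≥0 :=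
  p.2.1 * (γ (p.2.2, p.1.2) * q (p.1.2, p.1.1)) / (q (p.1.2, p.2.2) * γ p.1)

theorem density_mul_gibbsWeight (γ : V × Z → ℝ≥0) {q : Z × V → ℝ≥0} {x y : V} {z : Z}
    (u : ℝ≥0) (hq : q (z, y) ≠ 0) :
    q (z, y) * gibbsWeight γ q ((x, z), u, y) = u * (q (z, x) / γ (x, z)) * γ (y, z) := by
  rw [gibbsWeight, mul_div_assoc', mul_div_mul_left _ _ hq]
  ring

variable [MeasurableSpace V] [MeasurableSpace Z]

theorem measurable_gibbsWeight {γ : V × Z → ℝ≥0} {q : Z × V → ℝ≥0}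
    (hγ : Measurable γ) (hq : Measurable q) : Measurable (gibbsWeight γ q) := by
  unfold gibbsWeight
  fun_prop

theorem lintegral_density_mul_gibbsWeight {ν : Measure V} {γ : V × Z → ℝ≥0}
    {q : Z × V → ℝ≥0} (hγ : Measurable γ) {h : V × Z → ℝ≥0∞} (hh : Measurable h)
    (x : V) {z : Z} (hq : ∀ y, q (z, y) ≠ 0) (u : ℝ≥0) :
    ∫⁻ y, q (z, y) * (gibbsWeight γ q ((x, z), u, y) * h (y, z)) ∂ν
      = u * ((q (z, x) / γ (x, z) : ℝ≥0) * ∫⁻ y, γ (y, z) * h (y, z) ∂ν) := by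
  have hcancel : ∀ y, (q (z, y) : ℝ≥0∞) * (gibbsWeight γ q ((x, z), u, y) * h (y, z))
      = (u * (q (z, x) / γ (x, z)) : ℝ≥0) * (γ (y, z) * h (y, z)) := fun y => by
    rw [← mul_assoc, ← coe_mul, density_mul_gibbsWeight γ u (hq y), coe_mul, mul_assoc]
  simp_rw [hcancel]
  rw [lintegral_const_mul _ (by fun_prop), coe_mul, mul_assoc]

theorem lintegral_prod_density_mul_eq_lintegral {ν : Measure V} {μ : Measure Z}
    [SFinite ν] [SFinite μ] {q : Z × V → ℝ≥0∞} (hq : Measurable q)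
    (hq1 : ∀ z, ∫⁻ y, q (z, y) ∂ν = 1)
    {G : Z → ℝ≥0∞} (hG : Measurable G) :
    ∫⁻ p, q (p.2, p.1) * G p.2 ∂(ν.prod μ) = ∫⁻ z, G z ∂μ := by
  rw [lintegral_prod_symm _ (by fun_prop)]
  refine lintegral_congr fun z => ?_
  dsimp only
  rw [lintegral_mul_const _ (by fun_prop), hq1, one_mul]

end GibbsUpdate

theorem gibbs_update_strictly_properly_weighted_general
    {V Z α : Type*} [MeasurableSpace V] [MeasurableSpace Z] [MeasurableSpace α]
    (ν : Measure V) [SigmaFinite ν] (μ : Measure Z) [SigmaFinite μ]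
    (P : Measure α)
    (γ : V × Z → ℝ≥0) (hγ : Measurable γ) (hγpos : ∀ p, 0 < γ p)
    (q : Z × V → ℝ≥0) (hq : Measurable q) (hqpos : ∀ p, 0 < q p)
    (hq1 : ∀ z, ∫⁻ v', (q (z, v') : ℝ≥0∞) ∂ν = 1)
    (v : α → V) (z : α → Z) (w : α → ℝ≥0) (v' : α → V)
    (hpw : ∀ h : V × Z → ℝ≥0∞, Measurable h →
      ∫⁻ a, (w a : ℝ≥0∞) * h (v a, z a) ∂P
        = ∫⁻ p, (γ p : ℝ≥0∞) * h p ∂(ν.prod μ))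
    (hcond : ∀ g : (V × Z) × ℝ≥0 × V → ℝ≥0∞, Measurable g →
      ∫⁻ a, g ((v a, z a), w a, v' a) ∂P
        = ∫⁻ a, ∫⁻ y, (q (z a, y) : ℝ≥0∞) * g ((v a, z a), w a, y) ∂ν ∂P) :
    ∀ h : V × Z → ℝ≥0∞, Measurable h →
      ∫⁻ a, ((w a * (γ (v' a, z a) * q (z a, v a)) /
          (q (z a, v' a) * γ (v a, z a)) : ℝ≥0) : ℝ≥0∞) * h (v' a, z a) ∂P
        = ∫⁻ p, (γ p : ℝ≥0∞) * h p ∂(ν.prod μ) := by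
  intro h hh
  set G : Z → ℝ≥0∞ := fun z => ∫⁻ y, γ (y, z) * h (y, z) ∂ν
  have hG : Measurable G := (hγ.coe_nnreal_ennreal.mul hh).lintegral_prod_left'
  have hγq : ∀ p, (γ p : ℝ≥0∞) * (q (p.2, p.1) / γ p : ℝ≥0) = q (p.2, p.1) := fun p => by
    rw [← coe_mul, mul_div_cancel₀ _ (hγpos p).ne']
  calc _ = ∫⁻ a, ∫⁻ y, q (z a, y) * (gibbsWeight γ q ((v a, z a), w a, y) * h (y, z a)) ∂ν ∂P :=
        hcond (fun p => gibbsWeight γ q p * h (p.2.2, p.1.2))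
          ((measurable_gibbsWeight hγ hq).coe_nnreal_ennreal.mul (by fun_prop))
    _ = ∫⁻ a, w a * ((q (z a, v a) / γ (v a, z a) : ℝ≥0) * G (z a)) ∂P :=
        lintegral_congr fun a =>
          lintegral_density_mul_gibbsWeight hγ hh _ (fun _ => (hqpos _).ne') _
    _ = ∫⁻ p, γ p * ((q (p.2, p.1) / γ p : ℝ≥0) * G p.2) ∂(ν.prod μ) :=
        hpw (fun p => (q (p.2, p.1) / γ p : ℝ≥0) * G p.2) (by fun_prop)
    _ = ∫⁻ p, q (p.2, p.1) * G p.2 ∂(ν.prod μ) := by simp_rw [← mul_assoc, hγq]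
    _ = ∫⁻ z, G z ∂μ := lintegral_prod_density_mul_eq_lintegral hq.coe_nnreal_ennreal hq1 hG
    _ = ∫⁻ p, γ p * h p ∂(ν.prod μ) :=
        (lintegral_prod_symm _ (hγ.coe_nnreal_ennreal.mul hh).aemeasurable).symm

/-- The Gibbs block-update of amortized population Gibbs sampling preserves strict
proper weighting: updating `v` to `v' ~ q(z,·)` and reweighting by
`γ(v',z)·q(z,v) / (q(z,v')·γ(v,z))` yields a pair `((v',z), w')` that is strictly
properly weighted for `γ`. -/
theorem gibbs_update_strictly_properly_weighted
    {V Z α : Type*} [MeasurableSpace V] [MeasurableSpace Z] [MeasurableSpace α]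
    (ν : Measure V) [SigmaFinite ν] (μ : Measure Z) [SigmaFinite μ]
    (P : Measure α) [IsProbabilityMeasure P]
    (γ : V × Z → ℝ≥0) (hγ : Measurable γ) (hγpos : ∀ p, 0 < γ p)
    (q : Z × V → ℝ≥0) (hq : Measurable q) (hqpos : ∀ p, 0 < q p)
    (hq1 : ∀ z, ∫⁻ v', (q (z, v') : ℝ≥0∞) ∂ν = 1)
    (v : α → V) (z : α → Z) (w : α → ℝ≥0) (v' : α → V)
    (hv : Measurable v) (hz : Measurable z) (hw : Measurable w)
    (hv' : Measurable v')
    (hpw : ∀ h : V × Z → ℝ≥0∞, Measurable h →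
      ∫⁻ a, (w a : ℝ≥0∞) * h (v a, z a) ∂P
        = ∫⁻ p, (γ p : ℝ≥0∞) * h p ∂(ν.prod μ))
    (hcond : ∀ g : (V × Z) × ℝ≥0 × V → ℝ≥0∞, Measurable g →
      ∫⁻ a, g ((v a, z a), w a, v' a) ∂P
        = ∫⁻ a, ∫⁻ y, (q (z a, y) : ℝ≥0∞) * g ((v a, z a), w a, y) ∂ν ∂P) :
    ∀ h : V × Z → ℝ≥0∞, Measurable h →
      ∫⁻ a, ((w a * (γ (v' a, z a) * q (z a, v a)) /
          (q (z a, v' a) * γ (v a, z a)) : ℝ≥0) : ℝ≥0∞) * h (v' a, z a) ∂P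
        = ∫⁻ p, (γ p : ℝ≥0∞) * h p ∂(ν.prod μ) :=
  gibbs_update_strictly_properly_weighted_general ν μ P γ hγ hγpos q hq hqpos hq1 v z w v' hpw hcond
end

section
/- Let (Ω, μ) be a σ-finite measure space and let γ₁, …, γ_K : Ω → (0,∞) be measurable with Z_k := ∫ γ_k dμ ∈ (0,∞) for each k, and let π₁ := γ₁/Z₁, which is a probability density. For k = 2, …, K let q_k : Ω × Ω → (0,∞) be probability kernel densities (∫ q_k(x, y) dμ(y) = 1 for all x) and let r_k : Ω × Ω → [0,∞) be probability kernel densities (∫ r_k(y, x) dμ(x) = 1 for all y). Sample τ₁ with law π₁·μ and, for k = 2, …, K, sample τ_k conditionally with law q_k(τ_{k−1}, ·)·μ. Define w := ∏_{k=2}^{K} [ γ_k(τ_k)·r_k(τ_k, τ_{k−1}) / ( γ_{k−1}(τ_{k−1})·q_k(τ_{k−1}, τ_k) ) ]. Then for every measurable h : Ω → [0,∞], E[w · h(τ_K)] = (1/Z₁) ∫ γ_K·h dμ. In particular E[w] = Z_K / Z₁, so w is an unbiased estimator of the ratio of normalizing constants. -/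
open MeasureTheory ProbabilityTheory ENNReal NNReal

private lemma ais_prod_cancel {n : ℕ} (f : Fin (n + 1) → ℝ≥0∞) (a b : Fin n → ℝ≥0∞)
    (hf0 : ∀ k, f k ≠ 0) (hff : ∀ k, f k ≠ ∞)
    (hb0 : ∀ i, b i ≠ 0) (hbf : ∀ i, b i ≠ ∞) :
    (∏ i : Fin n, (f i.succ * a i) / (f i.castSucc * b i)) * (f 0 * ∏ i : Fin n, b i)
      = f (Fin.last n) * ∏ i : Fin n, a i := by
  set C : ℝ≥0∞ := ∏ i : Fin n, (f i.castSucc * b i) with hC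
  have hC0 : C ≠ 0 := by
    rw [hC]
    exact Finset.prod_ne_zero_iff.2 fun i _ => mul_ne_zero (hf0 _) (hb0 _)
  have hCf : C ≠ ∞ := ENNReal.prod_ne_top fun i _ => ENNReal.mul_ne_top (hff _) (hbf _)
  have cancel : ∀ u v : ℝ≥0∞, u * C = v * C → u = v := by
    intro u v huv
    have h2 := congrArg (· * C⁻¹) huv
    simpa [mul_assoc, ENNReal.mul_inv_cancel hC0 hCf] using h2
  refine cancel _ _ ?_
  have key : (∏ i : Fin n, (f i.succ * a i) / (f i.castSucc * b i)) * C
      = ∏ i : Fin n, (f i.succ * a i) := by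
    rw [hC, ← Finset.prod_mul_distrib]
    exact Finset.prod_congr rfl fun i _ =>
      ENNReal.div_mul_cancel (mul_ne_zero (hf0 _) (hb0 _)) (ENNReal.mul_ne_top (hff _) (hbf _))
  have tele : f 0 * ∏ i : Fin n, f i.succ = (∏ i : Fin n, f i.castSucc) * f (Fin.last n) := by
    rw [← Fin.prod_univ_succ f, ← Fin.prod_univ_castSucc f]
  calc (∏ i : Fin n, (f i.succ * a i) / (f i.castSucc * b i)) * (f 0 * ∏ i : Fin n, b i) * C
      = ((∏ i : Fin n, (f i.succ * a i) / (f i.castSucc * b i)) * C)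
          * (f 0 * ∏ i : Fin n, b i) := by ring
    _ = (∏ i : Fin n, f i.succ * a i) * (f 0 * ∏ i : Fin n, b i) := by rw [key]
    _ = (f 0 * ∏ i : Fin n, f i.succ) * ((∏ i : Fin n, a i) * (∏ i : Fin n, b i)) := by
        rw [Finset.prod_mul_distrib]; ring
    _ = ((∏ i : Fin n, f i.castSucc) * f (Fin.last n))
          * ((∏ i : Fin n, a i) * (∏ i : Fin n, b i)) := by rw [tele]
    _ = f (Fin.last n) * (∏ i : Fin n, a i) * C := by
        rw [hC, Finset.prod_mul_distrib]; ring

private lemma ais_r_integral {Ω : Type*} [MeasurableSpace Ω] (μ : Measure Ω) [SigmaFinite μ] :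
    ∀ (n : ℕ) (r : Fin n → Ω → Ω → ℝ≥0),
      (∀ i, Measurable (Function.uncurry (r i))) →
      (∀ i y, ∫⁻ x, (r i y x : ℝ≥0∞) ∂μ = 1) →
      ∀ g : Ω → ℝ≥0∞, Measurable g →
      ∫⁻ x, (∏ i : Fin n, (r i (x i.succ) (x i.castSucc) : ℝ≥0∞)) * g (x (Fin.last n))
          ∂(Measure.pi fun _ : Fin (n + 1) => μ)
        = ∫⁻ y, g y ∂μ := by
  intro n
  induction n with
  | zero =>
      intro r _ _ g hg
      simp only [Finset.univ_eq_empty, Finset.prod_empty, one_mul]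
      exact (measurePreserving_funUnique μ (Fin 1)).lintegral_comp hg
  | succ n ih =>
      intro r hrm hr1 g hg
      have hrm' : ∀ i : Fin (n + 1), Measurable fun p : Ω × Ω => (r i p.1 p.2 : ℝ≥0∞) :=
        fun i => measurable_coe_nnreal_ennreal.comp (hrm i)
      set F : (Fin (n + 2) → Ω) → ℝ≥0∞ := fun x =>
        (∏ i : Fin (n + 1), (r i (x i.succ) (x i.castSucc) : ℝ≥0∞)) * g (x (Fin.last (n + 1)))
        with hFdef
      have hF : Measurable F := by
        refine Measurable.mul ?_ (hg.comp (measurable_pi_apply _))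
        refine Finset.measurable_prod _ fun i _ => ?_
        have := hrm i
        fun_prop
      have hmp := (measurePreserving_piFinSuccAbove (fun _ : Fin (n + 2) => μ) 0).symm
      show ∫⁻ x, F x ∂(Measure.pi fun _ : Fin (n + 2) => μ) = ∫⁻ y, g y ∂μ
      rw [← hmp.lintegral_comp hF]
      have hFe : Measurable fun z : Ω × (Fin (n + 1) → Ω) =>
          F ((MeasurableEquiv.piFinSuccAbove (fun _ : Fin (n + 2) => Ω) 0).symm z) :=
        hF.comp (MeasurableEquiv.measurable _)
      rw [lintegral_prod_symm _ hFe.aemeasurable]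
      have happ : ∀ (x0 : Ω) (y : Fin (n + 1) → Ω),
          ((MeasurableEquiv.piFinSuccAbove (fun _ : Fin (n + 2) => Ω) 0).symm (x0, y))
            = Fin.cons x0 y := by
        intro x0 y
        ext j
        simp [MeasurableEquiv.piFinSuccAbove, Fin.insertNth_zero']
      have inner : ∀ y : Fin (n + 1) → Ω,
          (∫⁻ x0, F ((MeasurableEquiv.piFinSuccAbove (fun _ : Fin (n + 2) => Ω) 0).symm (x0, y)) ∂μ)
            = (∏ j : Fin n, (r j.succ (y j.succ) (y j.castSucc) : ℝ≥0∞)) * g (y (Fin.last n)) := by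
        intro y
        have hval : ∀ x0 : Ω,
            F ((MeasurableEquiv.piFinSuccAbove (fun _ : Fin (n + 2) => Ω) 0).symm (x0, y))
              = (r 0 (y 0) x0 : ℝ≥0∞) *
                ((∏ j : Fin n, (r j.succ (y j.succ) (y j.castSucc) : ℝ≥0∞))
                  * g (y (Fin.last n))) := by
          intro x0
          rw [happ, hFdef]
          simp only []
          rw [Fin.prod_univ_succ]
          have e1 : (Fin.cons x0 y : Fin (n + 2) → Ω) ((0 : Fin (n + 1)).succ) = y 0 := by
            exact Fin.cons_succ _ _ _
          have e2 : (Fin.cons x0 y : Fin (n + 2) → Ω) ((0 : Fin (n + 1)).castSucc) = x0 := rfl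
          have e5 : (Fin.cons x0 y : Fin (n + 2) → Ω) (Fin.last (n + 1)) = y (Fin.last n) := by
            rw [← Fin.succ_last]; exact Fin.cons_succ _ _ _
          rw [e1, e2, e5]
          have eprod : ∀ j : Fin n,
              (r j.succ ((Fin.cons x0 y : Fin (n + 2) → Ω) (j.succ : Fin (n + 1)).succ)
                  ((Fin.cons x0 y : Fin (n + 2) → Ω) (j.succ : Fin (n + 1)).castSucc) : ℝ≥0∞)
                = (r j.succ (y j.succ) (y j.castSucc) : ℝ≥0∞) := by
            intro j
            have h1 : (Fin.cons x0 y : Fin (n + 2) → Ω) (j.succ : Fin (n + 1)).succ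
                = y j.succ := Fin.cons_succ _ _ _
            have h2 : (Fin.cons x0 y : Fin (n + 2) → Ω) (j.succ : Fin (n + 1)).castSucc
                = y j.castSucc := by
              rw [← Fin.succ_castSucc]; exact Fin.cons_succ _ _ _
            rw [h1, h2]
          rw [Finset.prod_congr rfl fun j _ => eprod j, mul_assoc]
        have hmeas0 : Measurable fun x0 : Ω => ((r 0 (y 0) x0 : ℝ≥0) : ℝ≥0∞) := by
          have := hrm 0
          fun_prop
        rw [lintegral_congr hval, lintegral_mul_const _ hmeas0, hr1 0 (y 0), one_mul]
      rw [lintegral_congr inner]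
      exact ih (fun j => r j.succ) (fun j => hrm j.succ) (fun j => hr1 j.succ)
        (fun y' => g y') hg

/-- Proper weighting of the annealed importance sampler: sampling `τ₀ ~ γ₀/Z₀`,
then `τ_{k+1} ~ q_{k+1}(τ_k, ·)`, and forming the product of incremental weights
`∏ γ_{k+1}(τ_{k+1}) r_{k+1}(τ_{k+1}, τ_k) / (γ_k(τ_k) q_{k+1}(τ_k, τ_{k+1}))`
yields, for every measurable `h ≥ 0`, `E[w · h(τ_K)] = (1/Z₀) ∫ γ_K · h dμ`; in
particular `E[w] = Z_K / Z₀`. (Here the `K` densities are indexed by `Fin (n+1)`,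
with `0` the initial proposal and `Fin.last n` the final target.) -/
theorem annealed_importance_sampling_properly_weighted
    {Ω α : Type*} [MeasurableSpace Ω] [MeasurableSpace α]
    (μ : Measure Ω) [SigmaFinite μ]
    (P : Measure α) [IsProbabilityMeasure P]
    (n : ℕ)
    (γ : Fin (n + 1) → Ω → ℝ≥0)
    (hγmeas : ∀ k, Measurable (γ k)) (hγpos : ∀ k x, 0 < γ k x)
    (hZpos : ∀ k, 0 < ∫⁻ x, (γ k x : ℝ≥0∞) ∂μ)
    (hZfin : ∀ k, ∫⁻ x, (γ k x : ℝ≥0∞) ∂μ ≠ ∞)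
    (q : Fin n → Ω → Ω → ℝ≥0)
    (hqmeas : ∀ i, Measurable (Function.uncurry (q i)))
    (hqpos : ∀ i x y, 0 < q i x y)
    (hq1 : ∀ i x, ∫⁻ y, (q i x y : ℝ≥0∞) ∂μ = 1)
    (r : Fin n → Ω → Ω → ℝ≥0)
    (hrmeas : ∀ i, Measurable (Function.uncurry (r i)))
    (hr1 : ∀ i y, ∫⁻ x, (r i y x : ℝ≥0∞) ∂μ = 1)
    (τ : α → (Fin (n + 1) → Ω)) (hτ : Measurable τ)
    (hlaw : Measure.map τ P
      = (Measure.pi fun _ : Fin (n + 1) => μ).withDensity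
          (fun x => ((γ 0 (x 0) : ℝ≥0∞) / ∫⁻ y, (γ 0 y : ℝ≥0∞) ∂μ) *
            ∏ i : Fin n, (q i (x i.castSucc) (x i.succ) : ℝ≥0∞))) :
    (∀ h : Ω → ℝ≥0∞, Measurable h →
      ∫⁻ a, ((∏ i : Fin n,
            (γ i.succ (τ a i.succ) * r i (τ a i.succ) (τ a i.castSucc)) /
              (γ i.castSucc (τ a i.castSucc) *
                q i (τ a i.castSucc) (τ a i.succ)) : ℝ≥0) : ℝ≥0∞) *
          h (τ a (Fin.last n)) ∂P
        = (∫⁻ x, (γ (Fin.last n) x : ℝ≥0∞) * h x ∂μ) /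
            (∫⁻ x, (γ 0 x : ℝ≥0∞) ∂μ))
    ∧ ∫⁻ a, ((∏ i : Fin n,
          (γ i.succ (τ a i.succ) * r i (τ a i.succ) (τ a i.castSucc)) /
            (γ i.castSucc (τ a i.castSucc) *
              q i (τ a i.castSucc) (τ a i.succ)) : ℝ≥0) : ℝ≥0∞) ∂P
        = (∫⁻ x, (γ (Fin.last n) x : ℝ≥0∞) ∂μ) /
            (∫⁻ x, (γ 0 x : ℝ≥0∞) ∂μ) := by
  set Z0 : ℝ≥0∞ := ∫⁻ x, (γ 0 x : ℝ≥0∞) ∂μ with hZ0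
  have main : ∀ h : Ω → ℝ≥0∞, Measurable h →
      ∫⁻ a, ((∏ i : Fin n,
            (γ i.succ (τ a i.succ) * r i (τ a i.succ) (τ a i.castSucc)) /
              (γ i.castSucc (τ a i.castSucc) *
                q i (τ a i.castSucc) (τ a i.succ)) : ℝ≥0) : ℝ≥0∞) *
          h (τ a (Fin.last n)) ∂P
        = (∫⁻ x, (γ (Fin.last n) x : ℝ≥0∞) * h x ∂μ) / Z0 := by
    intro h hh
    set W : (Fin (n + 1) → Ω) → ℝ≥0 := fun x => ∏ i : Fin n,
        (γ i.succ (x i.succ) * r i (x i.succ) (x i.castSucc)) /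
          (γ i.castSucc (x i.castSucc) * q i (x i.castSucc) (x i.succ)) with hWdef
    set D : (Fin (n + 1) → Ω) → ℝ≥0∞ := fun x =>
        ((γ 0 (x 0) : ℝ≥0∞) / Z0) * ∏ i : Fin n, (q i (x i.castSucc) (x i.succ) : ℝ≥0∞)
      with hDdef
    set F : (Fin (n + 1) → Ω) → ℝ≥0∞ := fun x => (W x : ℝ≥0∞) * h (x (Fin.last n)) with hFdef
    have hWmeas : Measurable W := by
      refine Finset.measurable_prod _ fun i _ => Measurable.div ?_ ?_
      · have h1 := hγmeas i.succ
        have h2 := hrmeas i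
        fun_prop
      · have h1 := hγmeas i.castSucc
        have h2 := hqmeas i
        fun_prop
    have hF : Measurable F :=
      (measurable_coe_nnreal_ennreal.comp hWmeas).mul (hh.comp (measurable_pi_apply _))
    have hD : Measurable D := by
      refine Measurable.mul ?_ ?_
      · exact (measurable_coe_nnreal_ennreal.comp ((hγmeas 0).comp (measurable_pi_apply 0))).div
          measurable_const
      · refine Finset.measurable_prod _ fun i _ => ?_
        have := hqmeas i
        fun_prop
    have pointwise : ∀ x : Fin (n + 1) → Ω,
        D x * F x
          = ((∏ i : Fin n, (r i (x i.succ) (x i.castSucc) : ℝ≥0∞)) *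
              ((γ (Fin.last n) (x (Fin.last n)) : ℝ≥0∞) * h (x (Fin.last n)))) * Z0⁻¹ := by
      intro x
      have hcast : (W x : ℝ≥0∞)
          = ∏ i : Fin n,
              ((γ i.succ (x i.succ) : ℝ≥0∞) * (r i (x i.succ) (x i.castSucc) : ℝ≥0∞)) /
                ((γ i.castSucc (x i.castSucc) : ℝ≥0∞) *
                  (q i (x i.castSucc) (x i.succ) : ℝ≥0∞)) := by
        rw [hWdef]
        push_cast
        refine Finset.prod_congr rfl fun i _ => ?_
        rw [ENNReal.coe_div (mul_pos (hγpos _ _) (hqpos i _ _)).ne', ENNReal.coe_mul,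
          ENNReal.coe_mul]
      have key := ais_prod_cancel (fun k => (γ k (x k) : ℝ≥0∞))
        (fun i => (r i (x i.succ) (x i.castSucc) : ℝ≥0∞))
        (fun i => (q i (x i.castSucc) (x i.succ) : ℝ≥0∞))
        (fun k => by simpa using (hγpos k (x k)).ne')
        (fun k => ENNReal.coe_ne_top)
        (fun i => by simpa using (hqpos i (x i.castSucc) (x i.succ)).ne')
        (fun i => ENNReal.coe_ne_top)
      simp only [hDdef, hFdef, hcast]
      rw [ENNReal.div_eq_inv_mul]
      calc Z0⁻¹ * (γ 0 (x 0) : ℝ≥0∞) * (∏ i : Fin n, (q i (x i.castSucc) (x i.succ) : ℝ≥0∞)) *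
            ((∏ i : Fin n,
              ((γ i.succ (x i.succ) : ℝ≥0∞) * (r i (x i.succ) (x i.castSucc) : ℝ≥0∞)) /
                ((γ i.castSucc (x i.castSucc) : ℝ≥0∞) *
                  (q i (x i.castSucc) (x i.succ) : ℝ≥0∞))) * h (x (Fin.last n)))
          = ((∏ i : Fin n,
              ((γ i.succ (x i.succ) : ℝ≥0∞) * (r i (x i.succ) (x i.castSucc) : ℝ≥0∞)) /
                ((γ i.castSucc (x i.castSucc) : ℝ≥0∞) *
                  (q i (x i.castSucc) (x i.succ) : ℝ≥0∞))) *
              ((γ 0 (x 0) : ℝ≥0∞) * ∏ i : Fin n, (q i (x i.castSucc) (x i.succ) : ℝ≥0∞))) *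
              h (x (Fin.last n)) * Z0⁻¹ := by ring
        _ = ((γ (Fin.last n) (x (Fin.last n)) : ℝ≥0∞) *
              ∏ i : Fin n, (r i (x i.succ) (x i.castSucc) : ℝ≥0∞)) *
              h (x (Fin.last n)) * Z0⁻¹ := by rw [key]
        _ = ((∏ i : Fin n, (r i (x i.succ) (x i.castSucc) : ℝ≥0∞)) *
              ((γ (Fin.last n) (x (Fin.last n)) : ℝ≥0∞) * h (x (Fin.last n)))) * Z0⁻¹ := by ring
    calc ∫⁻ a, (W (τ a) : ℝ≥0∞) * h (τ a (Fin.last n)) ∂P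
        = ∫⁻ x, F x ∂(Measure.map τ P) := (lintegral_map hF hτ).symm
      _ = ∫⁻ x, F x ∂((Measure.pi fun _ : Fin (n + 1) => μ).withDensity D) := by
          rw [hlaw]
      _ = ∫⁻ x, D x * F x ∂(Measure.pi fun _ : Fin (n + 1) => μ) := by
          rw [lintegral_withDensity_eq_lintegral_mul _ hD hF]; rfl
      _ = ∫⁻ x, ((∏ i : Fin n, (r i (x i.succ) (x i.castSucc) : ℝ≥0∞)) *
              ((γ (Fin.last n) (x (Fin.last n)) : ℝ≥0∞) * h (x (Fin.last n)))) * Z0⁻¹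
            ∂(Measure.pi fun _ : Fin (n + 1) => μ) := lintegral_congr pointwise
      _ = (∫⁻ x, (∏ i : Fin n, (r i (x i.succ) (x i.castSucc) : ℝ≥0∞)) *
              ((γ (Fin.last n) (x (Fin.last n)) : ℝ≥0∞) * h (x (Fin.last n)))
            ∂(Measure.pi fun _ : Fin (n + 1) => μ)) * Z0⁻¹ := by
          refine lintegral_mul_const _ ?_
          refine Measurable.mul ?_ ?_
          · refine Finset.measurable_prod _ fun i _ => ?_
            have := hrmeas i
            fun_prop
          · exact ((measurable_coe_nnreal_ennreal.comp
              ((hγmeas _).comp (measurable_pi_apply _))).mul (hh.comp (measurable_pi_apply _)))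
      _ = (∫⁻ y, (γ (Fin.last n) y : ℝ≥0∞) * h y ∂μ) * Z0⁻¹ := by
          rw [ais_r_integral μ n r hrmeas hr1 (fun y => (γ (Fin.last n) y : ℝ≥0∞) * h y)
            ((measurable_coe_nnreal_ennreal.comp (hγmeas _)).mul hh)]
      _ = (∫⁻ y, (γ (Fin.last n) y : ℝ≥0∞) * h y ∂μ) / Z0 := by
          rw [ENNReal.div_eq_inv_mul, mul_comm]
  refine ⟨main, ?_⟩
  have h2 := main (fun _ => 1) measurable_const
  simpa using h2
end
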